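/- Let Λ ⊂ ℤ and f ∈ H_Λ with ‖f‖₂ = 1. Then there is an absolute constant C such that for every interval I ⊂ 𝕋, ∫_I |f(ξ)|² dξ ≤ C·ℓ(I)·D_Λ(ℓ(I)^{-1}), where ℓ(I) is the length of I and D_Λ(x) = sup_{t∈ℝ}|Λ ∩ [t,t+x]|. -/

import Mathlib

open MeasureTheory Complex
open scoped ENNReal Real

instance : Fact ((0:ℝ) < 1) := ⟨one_pos⟩

/-- Haar (Lebesgue) probability measure on the circle `𝕋 = ℝ/ℤ`. -/
noncomputable def μT : Measure (AddCircle (1:ℝ)) := AddCircle.haarAddCircle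

/-- `H_Λ`: the closed linear span in `L²(𝕋)` of the characters `e^{2πinξ}`, `n ∈ Λ`. -/
noncomputable def HLam (Λ : Set ℤ) : Submodule ℂ (Lp ℂ 2 μT) :=
  (Submodule.span ℂ ((fun n : ℤ => (fourierLp 2 n : Lp ℂ 2 μT)) '' Λ)).topologicalClosure

/-- `D_Λ(x) = sup_{t∈ℝ} |Λ ∩ [t, t+x]|` for `Λ ⊆ ℤ` (as an extended count). -/
noncomputable def DLamZ (Λ : Set ℤ) (x : ℝ) : ℝ≥0∞ :=
  ⨆ t : ℝ, (((fun n : ℤ => (n : ℝ)) '' Λ ∩ Set.Icc t (t + x)).encard : ℝ≥0∞)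

/-!
For a trigonometric polynomial `g = ∑_{n ∈ s} c_n e_n` with `s ⊆ Λ`, multiply `g` by the Dirichlet
kernel `P(x) = ∑_{0 ≤ m < N} e_m(x - y)` centred at the midpoint `y` of `I`, with `N ≈ 1 / (2ℓ(I))`.
On `I` the terms of `P` point in nearly the same direction, so `|P| ≥ N / 2` there and
`∫_I |g|² ≤ (2 / N)² ‖P g‖₂²`. The `k`-th Fourier coefficient of `P g` only involves the `n ∈ s` in
the window `(k - N, k]`, at most `D = D_Λ(ℓ(I)⁻¹)` of them, so by Cauchy–Schwarz
`‖P g‖₂² ≤ D N ‖g‖₂²`. Hence `∫_I |g|² ≤ 4 D ‖g‖₂² / N ≤ 8 ℓ(I) D ‖g‖₂²`, and the inequality passes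
to the closure `H_Λ` because both sides are continuous on `L²`.
-/

theorem MeasureTheory.Lp.integral_norm_sq_eq_norm_sq {α 𝕜 E : Type*} [MeasurableSpace α]
    [RCLike 𝕜] [NormedAddCommGroup E] [InnerProductSpace 𝕜 E] {μ : Measure α} (f : Lp E 2 μ) :
    ∫ a, ‖f a‖ ^ 2 ∂μ = ‖f‖ ^ 2 := by
  have h := congr_arg RCLike.re (L2.inner_def (𝕜 := 𝕜) f f)
  rw [← integral_re (L2.integrable_inner f f)] at h
  simpa only [inner_self_eq_norm_sq] using h.symm

theorem MeasureTheory.continuous_setIntegral_norm_sq {α E : Type*} [MeasurableSpace α]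
    [NormedAddCommGroup E] [InnerProductSpace ℝ E] (μ : Measure α) (s : Set α) :
    Continuous fun f : Lp E 2 μ => ∫ a in s, ‖f a‖ ^ 2 ∂μ := by
  have h : (fun f : Lp E 2 μ => ∫ a in s, ‖f a‖ ^ 2 ∂μ) =
      fun f => ‖LpToLpRestrictCLM α E ℝ μ 2 s f‖ ^ 2 := by
    ext f
    rw [← Lp.integral_norm_sq_eq_norm_sq (𝕜 := ℝ)]
    refine integral_congr_ae ?_
    filter_upwards [LpToLpRestrictCLM_coeFn ℝ s f] with a ha
    rw [ha]
  rw [h]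
  fun_prop

theorem AddCircle.measurableSet_coe_image_Ico {T a b : ℝ} (hab : a < b) :
    MeasurableSet (((↑) : ℝ → AddCircle T) '' Set.Ico a b) := by
  rw [← Set.Ioo_insert_left hab, Set.image_insert_eq]
  exact ((QuotientAddGroup.isOpenMap_coe _ isOpen_Ioo).measurableSet).insert _

theorem Orthonormal.norm_sum_smul_sq {ι E : Type*} [NormedAddCommGroup E] [InnerProductSpace ℂ E]
    {v : ι → E} (hv : Orthonormal ℂ v) (c : ι → ℂ) (s : Finset ι) :
    ‖∑ i ∈ s, c i • v i‖ ^ 2 = ∑ i ∈ s, ‖c i‖ ^ 2 := by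
  simpa using hv.orthogonalFamily.norm_sum c s

theorem Complex.card_div_two_le_norm_sum {ι : Type*} (s : Finset ι) (z : ι → ℂ) {w : ℂ}
    (hw : ‖w‖ = 1) (h : ∀ i ∈ s, 1 / 2 ≤ (w * z i).re) :
    (s.card : ℝ) / 2 ≤ ‖∑ i ∈ s, z i‖ :=
  calc (s.card : ℝ) / 2 = ∑ _i ∈ s, (1 / 2 : ℝ) := by simp [div_eq_mul_inv]
    _ ≤ (w * ∑ i ∈ s, z i).re := by
      rw [Finset.mul_sum, Complex.re_sum]
      exact Finset.sum_le_sum h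
    _ ≤ ‖∑ i ∈ s, z i‖ := by
      simpa [hw] using Complex.re_le_norm (w * ∑ i ∈ s, z i)

theorem Real.half_le_cos_of_abs_le_one {θ : ℝ} (hθ : |θ| ≤ 1) : 1 / 2 ≤ Real.cos θ := by
  nlinarith [Real.one_sub_sq_div_two_le_cos (x := θ), sq_abs θ, abs_nonneg θ]

section Fourier

open AddCircle

variable {T : ℝ}

theorem fourier_apply_add (n : ℤ) (x y : AddCircle T) :
    fourier n (x + y) = fourier n x * fourier n y := by
  simp only [fourier_apply, smul_add, AddCircle.toCircle_add, Circle.coe_mul]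

theorem card_div_two_le_norm_sum_fourier [Fact (0 < T)] (N : ℕ) {u : ℝ}
    (hu : |u| * (N - 1) ≤ T / 4) :
    (N : ℝ) / 2 ≤ ‖∑ m ∈ Finset.Ico (0 : ℤ) N, fourier m (u : AddCircle T)‖ := by
  have hT : 0 < T := Fact.out
  -- the rotation centres the phases `2π m u / T`, `0 ≤ m < N`, around `0`
  refine le_of_eq_of_le (by simp) (Complex.card_div_two_le_norm_sum _ _
    (Complex.norm_exp_ofReal_mul_I (-(π * (N - 1) * u / T))) fun m hm => ?_)
  obtain ⟨hm0, hmN⟩ := Finset.mem_Ico.mp hm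
  have hphase : Complex.exp ((-(π * (N - 1) * u / T) : ℝ) * I) * fourier m (u : AddCircle T) =
      Complex.exp ((π * (2 * m - (N - 1)) * u / T : ℝ) * I) := by
    rw [fourier_coe_apply, ← Complex.exp_add]
    congr 1
    push_cast
    ring
  rw [hphase, Complex.exp_ofReal_mul_I_re]
  apply Real.half_le_cos_of_abs_le_one
  have hm' : |2 * (m : ℝ) - (N - 1)| ≤ N - 1 := by
    have : (m : ℝ) + 1 ≤ N := by exact_mod_cast hmN
    have : (0 : ℝ) ≤ m := by exact_mod_cast hm0
    rw [abs_le]; constructor <;> linarith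
  calc |π * (2 * m - (N - 1)) * u / T| = π * (|2 * (m : ℝ) - (N - 1)| * |u|) / T := by
        rw [abs_div, abs_mul, abs_mul, abs_of_pos Real.pi_pos, abs_of_pos hT, mul_assoc]
    _ ≤ 4 * (T / 4) / T := by
        gcongr
        · exact Real.pi_le_four
        · calc |2 * (m : ℝ) - (N - 1)| * |u| ≤ (N - 1) * |u| := by gcongr
            _ ≤ T / 4 := by linarith
    _ = 1 := by field_simp

theorem Finset.mem_inter_Ioc_sub_and_mem_biUnion_Ico_iff (s : Finset ℤ) (N : ℕ) (n k : ℤ) :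
    n ∈ s ∧ k ∈ Finset.Ico n (n + N) ↔
      n ∈ s ∩ Finset.Ioc (k - N) k ∧ k ∈ s.biUnion fun n => Finset.Ico n (n + N) := by
  simp only [Finset.mem_biUnion, Finset.mem_inter, Finset.mem_Ico, Finset.mem_Ioc]
  constructor
  · rintro ⟨hn, hk⟩
    exact ⟨⟨hn, by omega, hk.1⟩, n, hn, hk⟩
  · rintro ⟨⟨hn, h1, h2⟩, -⟩
    exact ⟨hn, h2, by omega⟩

theorem sum_fourier_Ico_mul_sum_fourier (N : ℕ) (s : Finset ℤ) (c : ℤ → ℂ) (x y : AddCircle T) :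
    (∑ m ∈ Finset.Ico (0 : ℤ) N, fourier m (x - y)) * ∑ n ∈ s, c n * fourier n x =
      ∑ k ∈ s.biUnion (fun n => Finset.Ico n (n + N)),
        (∑ n ∈ s ∩ Finset.Ioc (k - N) k, fourier (k - n) (-y) * c n) * fourier k x := by
  have hshift : ∀ n k : ℤ, fourier (k - n) (x - y) * fourier n x =
      fourier (k - n) (-y) * fourier k x := fun n k => by
    rw [sub_eq_add_neg x y, fourier_apply_add, mul_right_comm, ← fourier_add, sub_add_cancel,
      mul_comm]
  calc (∑ m ∈ Finset.Ico (0 : ℤ) N, fourier m (x - y)) * ∑ n ∈ s, c n * fourier n x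
      = ∑ n ∈ s, ∑ m ∈ Finset.Ico (0 : ℤ) N,
          c n * (fourier (n + m - n) (x - y) * fourier n x) := by
        rw [Finset.sum_mul_sum, Finset.sum_comm]
        refine Finset.sum_congr rfl fun n _ => Finset.sum_congr rfl fun m _ => ?_
        rw [add_sub_cancel_left]
        ring
    _ = ∑ n ∈ s, ∑ k ∈ Finset.Ico n (n + N), fourier (k - n) (-y) * c n * fourier k x := by
        refine Finset.sum_congr rfl fun n _ => ?_
        rw [Finset.sum_Ico_add (fun k => c n * (fourier (k - n) (x - y) * fourier n x)), zero_add,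
          add_comm (N : ℤ)]
        refine Finset.sum_congr rfl fun k _ => ?_
        rw [hshift]
        ring
    _ = _ := by
        rw [Finset.sum_comm' (Finset.mem_inter_Ioc_sub_and_mem_biUnion_Ico_iff s N)]
        simp only [Finset.sum_mul]

theorem sum_norm_sq_sum_Ioc_le {s : Finset ℤ} {N : ℕ} {D : ℝ}
    (hD : ∀ k : ℤ, ((s ∩ Finset.Ioc (k - N) k).card : ℝ) ≤ D) (b : ℤ → ℤ → ℂ) (c : ℤ → ℂ)
    (hb : ∀ k n, ‖b k n‖ ≤ ‖c n‖) :
    ∑ k ∈ s.biUnion (fun n => Finset.Ico n (n + N)),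
        ‖∑ n ∈ s ∩ Finset.Ioc (k - N) k, b k n‖ ^ 2 ≤ D * N * ∑ n ∈ s, ‖c n‖ ^ 2 := by
  have hwindow : ∀ k, ‖∑ n ∈ s ∩ Finset.Ioc (k - N) k, b k n‖ ^ 2 ≤
      D * ∑ n ∈ s ∩ Finset.Ioc (k - N) k, ‖c n‖ ^ 2 := fun k =>
    calc ‖∑ n ∈ s ∩ Finset.Ioc (k - N) k, b k n‖ ^ 2
        ≤ (∑ n ∈ s ∩ Finset.Ioc (k - N) k, ‖c n‖) ^ 2 := by
          gcongr
          exact (norm_sum_le _ _).trans (Finset.sum_le_sum fun n _ => hb k n)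
      _ ≤ (s ∩ Finset.Ioc (k - N) k).card * ∑ n ∈ s ∩ Finset.Ioc (k - N) k, ‖c n‖ ^ 2 :=
          sq_sum_le_card_mul_sum_sq
      _ ≤ D * ∑ n ∈ s ∩ Finset.Ioc (k - N) k, ‖c n‖ ^ 2 := by gcongr; exact hD k
  calc ∑ k ∈ s.biUnion (fun n => Finset.Ico n (n + N)),
          ‖∑ n ∈ s ∩ Finset.Ioc (k - N) k, b k n‖ ^ 2
      ≤ ∑ k ∈ s.biUnion (fun n => Finset.Ico n (n + N)),
          D * ∑ n ∈ s ∩ Finset.Ioc (k - N) k, ‖c n‖ ^ 2 := Finset.sum_le_sum fun k _ => hwindow k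
    _ = D * ∑ n ∈ s, ∑ _k ∈ Finset.Ico n (n + N), ‖c n‖ ^ 2 := by
        rw [← Finset.mul_sum,
          Finset.sum_comm' (Finset.mem_inter_Ioc_sub_and_mem_biUnion_Ico_iff s N)]
    _ = D * N * ∑ n ∈ s, ‖c n‖ ^ 2 := by
        simp [Finset.mul_sum, mul_assoc]

variable [Fact (0 < T)]

theorem sum_smul_fourierLp_eq_toLp (s : Finset ℤ) (c : ℤ → ℂ) :
    ∑ n ∈ s, c n • fourierLp (T := T) 2 n =
      ContinuousMap.toLp 2 haarAddCircle ℂ (∑ n ∈ s, c n • fourier n) := by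
  rw [map_sum]
  exact Finset.sum_congr rfl fun n _ => by rw [map_smul]

theorem coeFn_sum_smul_fourierLp (s : Finset ℤ) (c : ℤ → ℂ) :
    ⇑(∑ n ∈ s, c n • fourierLp (T := T) 2 n) =ᵐ[haarAddCircle]
      fun x => ∑ n ∈ s, c n * fourier n x := by
  rw [sum_smul_fourierLp_eq_toLp]
  filter_upwards [ContinuousMap.coeFn_toLp (E := ℂ) (p := 2) (𝕜 := ℂ) haarAddCircle
    (∑ n ∈ s, c n • fourier n)] with x hx
  rw [hx]
  simp only [ContinuousMap.sum_apply, ContinuousMap.smul_apply, smul_eq_mul]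

theorem norm_sum_smul_fourierLp_sq (s : Finset ℤ) (c : ℤ → ℂ) :
    ‖∑ n ∈ s, c n • fourierLp (T := T) 2 n‖ ^ 2 = ∑ n ∈ s, ‖c n‖ ^ 2 :=
  orthonormal_fourier.norm_sum_smul_sq c s

theorem integral_norm_sq_sum_fourier (s : Finset ℤ) (c : ℤ → ℂ) :
    ∫ x, ‖∑ n ∈ s, c n * fourier n x‖ ^ 2 ∂haarAddCircle (T := T) = ∑ n ∈ s, ‖c n‖ ^ 2 := by
  rw [← norm_sum_smul_fourierLp_sq (T := T), ← Lp.integral_norm_sq_eq_norm_sq (𝕜 := ℂ)]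
  refine integral_congr_ae ?_
  filter_upwards [coeFn_sum_smul_fourierLp s c] with x hx
  rw [hx]

theorem setIntegral_norm_sq_sum_fourier_le {N : ℕ} (hN : 0 < N) {s : Finset ℤ} {D : ℝ}
    (hD : ∀ k : ℤ, ((s ∩ Finset.Ioc (k - N) k).card : ℝ) ≤ D) (c : ℤ → ℂ) {t l : ℝ}
    (hl : 0 < l) (hlN : l * (N - 1) ≤ T / 2) :
    ∫ x in ((↑) : ℝ → AddCircle T) '' Set.Ico t (t + l), ‖∑ n ∈ s, c n * fourier n x‖ ^ 2
        ∂haarAddCircle ≤ 4 * D / N * ∑ n ∈ s, ‖c n‖ ^ 2 := by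
  set S := ((↑) : ℝ → AddCircle T) '' Set.Ico t (t + l)
  set y : AddCircle T := ((t + l / 2 : ℝ) : AddCircle T)
  set a : ℤ → ℂ := fun k => ∑ n ∈ s ∩ Finset.Ioc (k - N) k, fourier (k - n) (-y) * c n
  set K := s.biUnion fun n => Finset.Ico n (n + N)
  have hpointwise : ∀ x ∈ S, ((N : ℝ) / 2) ^ 2 * ‖∑ n ∈ s, c n * fourier n x‖ ^ 2 ≤
      ‖∑ k ∈ K, a k * fourier k x‖ ^ 2 := by
    rintro _ ⟨v, hv, rfl⟩
    rw [← sum_fourier_Ico_mul_sum_fourier, norm_mul, mul_pow]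
    gcongr
    rw [← AddCircle.coe_sub]
    apply card_div_two_le_norm_sum_fourier
    have hv' : |v - (t + l / 2)| ≤ l / 2 := by
      rw [abs_le]; constructor <;> linarith [hv.1, hv.2]
    have hN1 : (0 : ℝ) ≤ N - 1 := by
      have : (1 : ℝ) ≤ N := by exact_mod_cast hN
      linarith
    nlinarith
  have hint : ∀ (s' : Finset ℤ) (c' : ℤ → ℂ),
      Integrable (fun x : AddCircle T => ‖∑ n ∈ s', c' n * fourier n x‖ ^ 2) haarAddCircle :=
    fun s' c' => (by fun_prop : Continuous _).integrable_of_hasCompactSupport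
      (HasCompactSupport.of_compactSpace _)
  have hNpos : (0 : ℝ) < N := by exact_mod_cast hN
  calc ∫ x in S, ‖∑ n ∈ s, c n * fourier n x‖ ^ 2 ∂haarAddCircle
      = (2 / N) ^ 2 * ∫ x in S, ((N : ℝ) / 2) ^ 2 * ‖∑ n ∈ s, c n * fourier n x‖ ^ 2
          ∂haarAddCircle := by
        rw [integral_const_mul, ← mul_assoc, ← mul_pow, div_mul_div_cancel₀ hNpos.ne',
          div_self two_ne_zero, one_pow, one_mul]
    _ ≤ (2 / N) ^ 2 * ∫ x in S, ‖∑ k ∈ K, a k * fourier k x‖ ^ 2 ∂haarAddCircle :=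
        mul_le_mul_of_nonneg_left (setIntegral_mono_on ((hint s c).const_mul _).integrableOn
          (hint K a).integrableOn (measurableSet_coe_image_Ico (by linarith)) hpointwise)
          (by positivity)
    _ ≤ (2 / N) ^ 2 * ∫ x, ‖∑ k ∈ K, a k * fourier k x‖ ^ 2 ∂haarAddCircle :=
        mul_le_mul_of_nonneg_left
          (setIntegral_le_integral (hint K a) (ae_of_all _ fun x => sq_nonneg _)) (by positivity)
    _ = (2 / N) ^ 2 * ∑ k ∈ K, ‖a k‖ ^ 2 := by rw [integral_norm_sq_sum_fourier]
    _ ≤ (2 / N) ^ 2 * (D * N * ∑ n ∈ s, ‖c n‖ ^ 2) := by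
        gcongr
        refine sum_norm_sq_sum_Ioc_le hD _ c fun k n => ?_
        simp [fourier_apply, Circle.norm_coe]
    _ = 4 * D / N * ∑ n ∈ s, ‖c n‖ ^ 2 := by
        field_simp
        ring

theorem setIntegral_norm_sq_le_of_mem_closure_span_fourierLp {Λ : Set ℤ} {N : ℕ} (hN : 0 < N)
    {D : ℝ} (hD : ∀ k : ℤ, ((Λ ∩ Set.Ioc (k - N) k).ncard : ℝ) ≤ D) {t l : ℝ} (hl : 0 < l)
    (hlN : l * (N - 1) ≤ T / 2) {f : Lp ℂ 2 (haarAddCircle (T := T))}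
    (hf : f ∈ (Submodule.span ℂ (fourierLp 2 '' Λ)).topologicalClosure) :
    ∫ x in ((↑) : ℝ → AddCircle T) '' Set.Ico t (t + l), ‖f x‖ ^ 2 ∂haarAddCircle ≤
      4 * D / N * ‖f‖ ^ 2 := by
  set S := ((↑) : ℝ → AddCircle T) '' Set.Ico t (t + l)
  have hclosed : IsClosed {g : Lp ℂ 2 (haarAddCircle (T := T)) |
      ∫ x in S, ‖g x‖ ^ 2 ∂haarAddCircle ≤ 4 * D / N * ‖g‖ ^ 2} :=
    isClosed_le (continuous_setIntegral_norm_sq _ S) (continuous_const.mul (continuous_norm.pow 2))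
  rw [← SetLike.mem_coe, Submodule.topologicalClosure_coe] at hf
  refine closure_minimal (fun g hg => ?_) hclosed hf
  obtain ⟨c, hcΛ, rfl⟩ := (Finsupp.mem_span_image_iff_linearCombination ℂ).mp hg
  have hwin : ∀ k : ℤ, ((c.support ∩ Finset.Ioc (k - N) k).card : ℝ) ≤ D := fun k => by
    refine le_trans ?_ (hD k)
    rw [← Set.ncard_coe_finset, Finset.coe_inter, Finset.coe_Ioc]
    exact_mod_cast Set.ncard_le_ncard (Set.inter_subset_inter_left _ hcΛ)
      ((Set.finite_Ioc _ _).subset Set.inter_subset_right)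
  rw [Set.mem_ofPred_eq, Finsupp.linearCombination_apply, Finsupp.sum,
    norm_sum_smul_fourierLp_sq]
  refine le_of_eq_of_le (integral_congr_ae ?_) (setIntegral_norm_sq_sum_fourier_le hN hwin c hl hlN)
  filter_upwards [ae_restrict_of_ae (coeFn_sum_smul_fourierLp c.support c)] with x hx
  rw [hx]

end Fourier

theorem ncard_inter_Ioc_le_toReal_DLamZ {Λ : Set ℤ} {x : ℝ} (hΛ : DLamZ Λ x ≠ ⊤) {N : ℕ}
    (hN : (N : ℝ) - 1 ≤ x) (k : ℤ) :
    ((Λ ∩ Set.Ioc (k - N) k).ncard : ℝ) ≤ (DLamZ Λ x).toReal := by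
  have hfin : (Λ ∩ Set.Ioc (k - N) k).Finite := (Set.finite_Ioc _ _).subset Set.inter_subset_right
  have hsub : (fun n : ℤ => (n : ℝ)) '' (Λ ∩ Set.Ioc (k - N) k) ⊆
      (fun n : ℤ => (n : ℝ)) '' Λ ∩ Set.Icc ((k - N + 1 : ℤ) : ℝ) ((k - N + 1 : ℤ) + x) := by
    rintro _ ⟨n, ⟨hn, hnk⟩, rfl⟩
    obtain ⟨h1, h2⟩ := Set.mem_Ioc.mp hnk
    have h1' : ((k - N + 1 : ℤ) : ℝ) ≤ n := by exact_mod_cast (by omega : k - N + 1 ≤ n)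
    have h2' : (n : ℝ) ≤ k := by exact_mod_cast h2
    refine ⟨⟨n, hn, rfl⟩, h1', ?_⟩
    push_cast at h1' ⊢
    linarith
  have h : ((Λ ∩ Set.Ioc (k - N) k).ncard : ℝ≥0∞) ≤ DLamZ Λ x :=
    calc ((Λ ∩ Set.Ioc (k - N) k).ncard : ℝ≥0∞)
        = ((Λ ∩ Set.Ioc (k - N) k).encard : ℝ≥0∞) := by
          rw [← hfin.cast_ncard_eq]; rfl
      _ = (((fun n : ℤ => (n : ℝ)) '' (Λ ∩ Set.Ioc (k - N) k)).encard : ℝ≥0∞) := by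
          rw [Int.cast_injective.injOn.encard_image]
      _ ≤ DLamZ Λ x := le_iSup_of_le _ (by gcongr)
  simpa using ENNReal.toReal_mono hΛ h

/-- Lemma 5.1: there is an absolute constant `C` so that for every `Λ ⊆ ℤ`, every
`f ∈ H_Λ` with `‖f‖ = 1` and every interval `I ⊆ 𝕋` of length `ℓ(I) = l`,
`∫_I |f(ξ)|² dξ ≤ C·ℓ(I)·D_Λ(ℓ(I)⁻¹)`. -/
theorem integral_on_interval_le_density :
    ∃ C : ℝ, 0 < C ∧
      ∀ (Λ : Set ℤ) (f : Lp ℂ 2 μT), f ∈ HLam Λ → ‖f‖ = 1 →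
        ∀ t l : ℝ, 0 < l → l ≤ 1 →
          ENNReal.ofReal
              (∫ ξ in ((fun x : ℝ => (x : AddCircle (1:ℝ))) '' Set.Ico t (t + l)),
                ‖f ξ‖ ^ 2 ∂μT) ≤
            ENNReal.ofReal (C * l) * DLamZ Λ l⁻¹ := by
  refine ⟨8, by norm_num, ?_⟩
  unfold HLam μT
  intro Λ f hf hf1 t l hl _
  obtain hDtop | hDfin := eq_or_ne (DLamZ Λ l⁻¹) ⊤
  · rw [hDtop, ENNReal.mul_top (by simpa using hl)]
    exact le_top
  set D := (DLamZ Λ l⁻¹).toReal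
  set N := ⌊(2 * l)⁻¹⌋₊ + 1
  have hN : 1 < N * (2 * l) := by
    rw [← inv_lt_iff_one_lt_mul₀ (by positivity)]
    simpa [N] using Nat.lt_floor_add_one (2 * l)⁻¹
  have hNl : (N : ℝ) - 1 ≤ (2 * l)⁻¹ := by simpa [N] using Nat.floor_le (by positivity)
  have hlN : l * (N - 1) ≤ 1 / 2 :=
    calc l * (N - 1) ≤ l * (2 * l)⁻¹ := by gcongr
      _ = 1 / 2 := by field_simp
  have hbound := setIntegral_norm_sq_le_of_mem_closure_span_fourierLp (t := t) (Nat.succ_pos _)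
    (ncard_inter_Ioc_le_toReal_DLamZ hDfin (hNl.trans (inv_anti₀ hl (by linarith)))) hl hlN hf
  rw [hf1, one_pow, mul_one] at hbound
  have hconst : 4 * D / N ≤ 8 * l * D := by
    rw [div_le_iff₀ (by positivity)]
    nlinarith [ENNReal.toReal_nonneg (a := DLamZ Λ l⁻¹)]
  calc ENNReal.ofReal (∫ ξ in ((fun x : ℝ => (x : AddCircle (1:ℝ))) '' Set.Ico t (t + l)),
          ‖f ξ‖ ^ 2 ∂μT)
      ≤ ENNReal.ofReal (8 * l * D) := ENNReal.ofReal_le_ofReal (hbound.trans hconst)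
    _ = ENNReal.ofReal (8 * l) * DLamZ Λ l⁻¹ := by
        rw [ENNReal.ofReal_mul (by positivity), ENNReal.ofReal_toReal hDfin]
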